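/- Let X = Σ_{ℓ=1}^L W_ℓ H S_{ℓ−1} with W_ℓ ∈ ℝ_+^{N×K} for ℓ = 1,…,L and H ∈ ℝ_+^{K×T}, and set V = [W_1 ⋯ W_L] ∈ ℝ_+^{N×KL} and G = [H S_0; H S_1; …; H S_{L−1}] ∈ ℝ_+^{KL×T} (vertical stacking). Suppose: (A) G = [A M] Π for some diagonal matrix A ∈ ℝ^{KL×KL} with strictly positive diagonal entries, some M ∈ ℝ_+^{KL×(T−KL)}, and some T×T permutation matrix Π; (B) there is δ > 0 such that for any two distinct rows h_i, h_j of H one has cos_{2L}(h_i, h_j) ≤ 1 − δ, and for any row h_i of H and any τ, ℓ ∈ {1,…,L−1} with τ ≠ ℓ one has cos(S_τᵀ h_i, S_ℓᵀ h_i) ≤ 1 − δ; (C) V has rank KL. Then the factorization is unique up to permutation and positive scaling: if W'_1,…,W'_L ∈ ℝ_+^{N×K} and H' ∈ ℝ_+^{K×T} also satisfy X = Σ_{ℓ=1}^L W'_ℓ H' S_{ℓ−1} and their associated matrices V' = [W'_1 ⋯ W'_L] and G' = [H' S_0; …; H' S_{L−1}] satisfy (A), (B) (for some δ' > 0), and (C),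 then V = V' Λ P for some KL×KL diagonal matrix Λ with strictly positive diagonal entries and some KL×KL permutation matrix P. -/

import Mathlib

/-!
Separability (A) says that, up to positive scaling, the identity matrix sits among the columns
of `G`. Reading `X = V G = V' G'` on those columns gives `V = V' Q` with `Q ≥ 0` made of
columns of `G'`, and symmetrically `V' = V R` with `R ≥ 0`. Full column rank of `V'` turns
`V' Q R = V'` into `Q R = 1`, and a nonnegative matrix with a nonnegative inverse is a
positive diagonal matrix times a permutation matrix.
-/

open Matrix BigOperators

noncomputable section

/-- The `T × T` shift matrix `S_τ` with ones on the `τ`-th upper diagonal. -/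
def shiftMat (T τ : ℕ) : Matrix (Fin T) (Fin T) ℝ :=
  Matrix.of fun i j => if (j : ℕ) = (i : ℕ) + τ then 1 else 0

/-- Right shift with zero padding: `(S_τᵀ x)_j = x_{j-τ}`. -/
def shift {T : ℕ} (τ : ℕ) (x : Fin T → ℝ) : Fin T → ℝ :=
  (shiftMat T τ)ᵀ.mulVec x

/-- Euclidean dot product. -/
def dot {T : ℕ} (u v : Fin T → ℝ) : ℝ := ∑ i, u i * v i

/-- Euclidean norm. -/
def euclNorm {T : ℕ} (u : Fin T → ℝ) : ℝ := Real.sqrt (∑ i, u i ^ 2)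

open Classical in
/-- Cosine of the angle between two vectors, with the convention that it is `0`
if either vector is zero. -/
def vcos {T : ℕ} (u v : Fin T → ℝ) : ℝ :=
  if u = 0 ∨ v = 0 then 0 else dot u v / (euclNorm u * euclNorm v)

/-- The `L`-shift cosine similarity `cos_L`. -/
def cosL {T : ℕ} (L : ℕ) (u v : Fin T → ℝ) : ℝ :=
  ⨆ ℓ : Fin L, max (vcos (shift (ℓ : ℕ) u) v) (vcos u (shift (ℓ : ℕ) v))

/-- Condition (A) [Separable]: `G = [A M] Π` for a diagonal matrix `A` with strictly
positive diagonal entries, a nonnegative `M`, and a column permutation. The equivalence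
`e : Fin T ≃ (Fin L × Fin K) ⊕ Fin (T − L·K)` plays the role of the permutation `Π`
composed with the identification of the columns of the concatenation `[A M]`. -/
def SepCond {K T L : ℕ} (G : Matrix (Fin L × Fin K) (Fin T) ℝ) : Prop :=
  ∃ (a : Fin L × Fin K → ℝ) (M : Matrix (Fin L × Fin K) (Fin (T - L * K)) ℝ)
    (e : Fin T ≃ (Fin L × Fin K) ⊕ Fin (T - L * K)),
      (∀ i, 0 < a i) ∧ (∀ i j, 0 ≤ M i j) ∧
      ∀ j t, G j t = Matrix.fromCols (Matrix.diagonal a) M j (e t)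

/-- Condition (B) [Sequentially unique] with parameter `δ`: distinct rows of `H` have
`2L`-shift similarity at most `1 − δ`, and distinct shifts (by `τ, ℓ ∈ {1,…,L−1}`) of any
row of `H` have cosine at most `1 − δ`. -/
def SeqUnique {K T : ℕ} (L : ℕ) (H : Matrix (Fin K) (Fin T) ℝ) (δ : ℝ) : Prop :=
  (∀ i j : Fin K, i ≠ j → cosL (2 * L) (H i) (H j) ≤ 1 - δ) ∧
  (∀ i : Fin K, ∀ τ ℓ : ℕ, 1 ≤ τ → τ ≤ L - 1 → 1 ≤ ℓ → ℓ ≤ L - 1 → τ ≠ ℓ →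
    vcos (shift τ (H i)) (shift ℓ (H i)) ≤ 1 - δ)

namespace Matrix

theorem mul_right_injective_of_rank_eq_card {K m n o : Type*} [Field K] [Fintype n]
    {A : Matrix m n K} (h : A.rank = Fintype.card n) :
    Function.Injective fun B : Matrix n o K => A * B := by
  have hcol : LinearIndependent K A.col :=
    linearIndependent_iff_card_eq_finrank_span.mpr (h ▸ A.rank_eq_finrank_span_cols)
  intro B C hBC
  exact ext_col fun j => mulVec_injective_iff.mpr hcol congr(($hBC).col j)

theorem sum_mul_eq_mul_of_blocks {R l m n p : Type*} [NonUnitalNonAssocSemiring R]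
    [Fintype l] [Fintype m] (W : l → Matrix n m R) (H : l → Matrix m p R)
    (V : Matrix n (l × m) R) (G : Matrix (l × m) p R)
    (hV : ∀ i ℓ k, V i (ℓ, k) = W ℓ i k) (hG : ∀ ℓ k t, G (ℓ, k) t = H ℓ k t) :
    ∑ ℓ, W ℓ * H ℓ = V * G := by
  ext i t
  simp only [sum_apply, mul_apply, Fintype.sum_prod_type, hV, hG]

variable {𝕜 : Type*} [Field 𝕜] [LinearOrder 𝕜] [IsStrictOrderedRing 𝕜]

theorem exists_nonneg_eq_mul_of_mul_eq_mul {m n ι κ : Type*} [Fintype ι] [Fintype κ]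
    [DecidableEq ι] {V : Matrix m ι 𝕜} {V' : Matrix m κ 𝕜} {G : Matrix ι n 𝕜}
    {G' : Matrix κ n 𝕜} (hG' : ∀ q t, 0 ≤ G' q t) {a : ι → 𝕜} (ha : ∀ p, 0 < a p)
    {c : ι → n} (hGc : G.submatrix id c = diagonal a) (h : V * G = V' * G') :
    ∃ Q : Matrix κ ι 𝕜, (∀ q p, 0 ≤ Q q p) ∧ V = V' * Q := by
  refine ⟨G'.submatrix id c * diagonal a⁻¹, fun q p => ?_, ?_⟩
  · rw [mul_diagonal]
    exact mul_nonneg (hG' q (c p)) (inv_nonneg.mpr (ha p).le)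
  · have hcols : V * G.submatrix id c = V' * G'.submatrix id c := by
      simpa only [submatrix_mul _ _ _ id _ Function.bijective_id, submatrix_id_id] using
        congrArg (·.submatrix id c) h
    calc V = V * G.submatrix id c * diagonal a⁻¹ := by
          simp [hGc, Matrix.mul_assoc, diagonal_mul_diagonal, (ha _).ne']
      _ = V' * (G'.submatrix id c * diagonal a⁻¹) := by rw [hcols, Matrix.mul_assoc]

theorem mul_apply_term_eq_zero_of_nonneg {l m n : Type*} [Fintype m] {A : Matrix l m 𝕜}
    {B : Matrix m n 𝕜} (hA : ∀ i j, 0 ≤ A i j) (hB : ∀ i j, 0 ≤ B i j) {i : l} {k : n}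
    (h : (A * B) i k = 0) (j : m) : A i j * B j k = 0 :=
  (Finset.sum_eq_zero_iff_of_nonneg fun j _ => mul_nonneg (hA i j) (hB j k)).mp h j
    (Finset.mem_univ j)

theorem exists_diagonal_mul_permMatrix_of_nonneg_of_mul_eq_one {ι : Type*} [Fintype ι]
    [DecidableEq ι] {A B : Matrix ι ι 𝕜} (hA : ∀ i j, 0 ≤ A i j)
    (hB : ∀ i j, 0 ≤ B i j) (h : A * B = 1) :
    ∃ (d : ι → 𝕜) (σ : Equiv.Perm ι), (∀ i, 0 < d i) ∧ A = diagonal d * σ.permMatrix 𝕜 := by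
  have h' : B * A = 1 := mul_eq_one_comm.mp h
  have hpiv : ∀ i, ∃ k, 0 < B i k ∧ 0 < A k i := fun i => by
    obtain ⟨k, -, hk⟩ := Finset.exists_ne_zero_of_sum_ne_zero
      (by simp [h'] : (B * A) i i ≠ 0)
    exact ⟨k, (hB i k).lt_of_ne (left_ne_zero_of_mul hk).symm,
      (hA k i).lt_of_ne (right_ne_zero_of_mul hk).symm⟩
  choose k hBk hAk using hpiv
  have hA_zero : ∀ q i, q ≠ k i → A q i = 0 := fun q i hq =>
    (mul_eq_zero.mp (mul_apply_term_eq_zero_of_nonneg hA hB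
      (by rw [h, one_apply_ne hq]) i)).resolve_right (hBk i).ne'
  have hk : Function.Injective k := fun i j hij => by
    by_contra hne
    have := mul_apply_term_eq_zero_of_nonneg hB hA (by rw [h', one_apply_ne hne]) (k i)
    exact (mul_pos (hBk i) (hij ▸ hAk j)).ne' this
  set σ := (Equiv.ofBijective k hk.bijective_of_finite).symm
  have hkσ : ∀ q, k (σ q) = q := (Equiv.ofBijective k _).apply_symm_apply
  refine ⟨fun q => A q (σ q), σ, fun q => by simpa [hkσ q] using hAk (σ q), ?_⟩
  ext q j
  simp only [diagonal_mul, Equiv.Perm.permMatrix, PEquiv.toMatrix_apply, Equiv.toPEquiv_apply,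
    Option.mem_def, Option.some.injEq]
  by_cases hj : σ q = j
  · rw [if_pos hj, mul_one, hj]
  · rw [if_neg hj, mul_zero]
    exact hA_zero q j fun hq => hj (by rw [hq]; exact hk (hkσ _))

end Matrix

theorem SepCond.nonneg {K T L : ℕ} {G : Matrix (Fin L × Fin K) (Fin T) ℝ} (hG : SepCond G)
    (q : Fin L × Fin K) (t : Fin T) : 0 ≤ G q t := by
  obtain ⟨a, M, e, ha, hM, hGe⟩ := hG
  rw [hGe]
  rcases e t with p | p
  · rw [fromCols_apply_inl, diagonal_apply]
    split_ifs
    exacts [(ha q).le, le_rfl]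
  · exact hM q p

theorem SepCond.exists_submatrix_eq_diagonal {K T L : ℕ} {G : Matrix (Fin L × Fin K) (Fin T) ℝ}
    (hG : SepCond G) : ∃ (a : Fin L × Fin K → ℝ) (c : Fin L × Fin K → Fin T),
      (∀ p, 0 < a p) ∧ G.submatrix id c = diagonal a := by
  obtain ⟨a, M, e, ha, -, hGe⟩ := hG
  refine ⟨a, fun p => e.symm (Sum.inl p), ha, ?_⟩
  ext q p
  simp only [submatrix_apply, id, hGe, Equiv.apply_symm_apply, fromCols_apply_inl]

theorem SepCond.exists_nonneg_eq_mul {N K T L : ℕ} {V V' : Matrix (Fin N) (Fin L × Fin K) ℝ}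
    {G G' : Matrix (Fin L × Fin K) (Fin T) ℝ} (hA : SepCond G) (hA' : SepCond G')
    (h : V * G = V' * G') : ∃ Q : Matrix (Fin L × Fin K) (Fin L × Fin K) ℝ,
      (∀ q p, 0 ≤ Q q p) ∧ V = V' * Q := by
  obtain ⟨a, c, ha, hGc⟩ := hA.exists_submatrix_eq_diagonal
  exact exists_nonneg_eq_mul_of_mul_eq_mul hA'.nonneg ha hGc h

theorem cnmf_unique_solution_general (N K T L : ℕ)
    (W W' : Fin L → Matrix (Fin N) (Fin K) ℝ) (H H' : Matrix (Fin K) (Fin T) ℝ)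
    (X : Matrix (Fin N) (Fin T) ℝ)
    (hX : X = ∑ ℓ : Fin L, W ℓ * H * shiftMat T (ℓ : ℕ))
    (hX' : X = ∑ ℓ : Fin L, W' ℓ * H' * shiftMat T (ℓ : ℕ))
    (V V' : Matrix (Fin N) (Fin L × Fin K) ℝ)
    (hV : ∀ (i : Fin N) (ℓ : Fin L) (k : Fin K), V i (ℓ, k) = W ℓ i k)
    (hV' : ∀ (i : Fin N) (ℓ : Fin L) (k : Fin K), V' i (ℓ, k) = W' ℓ i k)
    (G G' : Matrix (Fin L × Fin K) (Fin T) ℝ)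
    (hG : ∀ (ℓ : Fin L) (k : Fin K) (t : Fin T),
      G (ℓ, k) t = (H * shiftMat T (ℓ : ℕ)) k t)
    (hG' : ∀ (ℓ : Fin L) (k : Fin K) (t : Fin T),
      G' (ℓ, k) t = (H' * shiftMat T (ℓ : ℕ)) k t)
    -- (A) for both factorizations
    (hA : SepCond G) (hA' : SepCond G')
    -- (C) for both factorizations
    (hC' : V'.rank = K * L) :
    ∃ (Λ : Fin L × Fin K → ℝ) (σ : Equiv.Perm (Fin L × Fin K)),
      (∀ i, 0 < Λ i) ∧ V = V' * Matrix.diagonal Λ * σ.permMatrix ℝ := by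
  have hVG : V * G = V' * G' := by
    simp only [Matrix.mul_assoc] at hX hX'
    rw [← sum_mul_eq_mul_of_blocks W _ V G hV hG,
      ← sum_mul_eq_mul_of_blocks W' _ V' G' hV' hG', ← hX, hX']
  obtain ⟨Q, hQ, hVQ⟩ := hA.exists_nonneg_eq_mul hA' hVG
  obtain ⟨R, hR, hV'R⟩ := hA'.exists_nonneg_eq_mul hA hVG.symm
  have hQR : Q * R = 1 := mul_right_injective_of_rank_eq_card
    (by simpa [mul_comm] using hC') <| show V' * (Q * R) = V' * 1 by
      rw [← Matrix.mul_assoc, ← hVQ, ← hV'R, Matrix.mul_one]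
  obtain ⟨Λ, σ, hΛ, rfl⟩ := exists_diagonal_mul_permMatrix_of_nonneg_of_mul_eq_one hQ hR hQR
  exact ⟨Λ, σ, hΛ, by rw [hVQ, Matrix.mul_assoc]⟩

/-- Unique Solution: under (A) separability, (B) sequential uniqueness, and
(C) full rank of `V`, the convolutive NMF `X = Σ_ℓ W_ℓ H S_{ℓ−1}` is unique up to
permutation and positive scaling of the columns of `V = [W_1 ⋯ W_L]`. -/
theorem cnmf_unique_solution (N K T L : ℕ) (hL : 0 < L)
    (W W' : Fin L → Matrix (Fin N) (Fin K) ℝ) (H H' : Matrix (Fin K) (Fin T) ℝ)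
    (hWpos : ∀ ℓ i k, 0 ≤ W ℓ i k) (hHpos : ∀ k t, 0 ≤ H k t)
    (hW'pos : ∀ ℓ i k, 0 ≤ W' ℓ i k) (hH'pos : ∀ k t, 0 ≤ H' k t)
    (X : Matrix (Fin N) (Fin T) ℝ)
    (hX : X = ∑ ℓ : Fin L, W ℓ * H * shiftMat T (ℓ : ℕ))
    (hX' : X = ∑ ℓ : Fin L, W' ℓ * H' * shiftMat T (ℓ : ℕ))
    (V V' : Matrix (Fin N) (Fin L × Fin K) ℝ)
    (hV : ∀ (i : Fin N) (ℓ : Fin L) (k : Fin K), V i (ℓ, k) = W ℓ i k)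
    (hV' : ∀ (i : Fin N) (ℓ : Fin L) (k : Fin K), V' i (ℓ, k) = W' ℓ i k)
    (G G' : Matrix (Fin L × Fin K) (Fin T) ℝ)
    (hG : ∀ (ℓ : Fin L) (k : Fin K) (t : Fin T),
      G (ℓ, k) t = (H * shiftMat T (ℓ : ℕ)) k t)
    (hG' : ∀ (ℓ : Fin L) (k : Fin K) (t : Fin T),
      G' (ℓ, k) t = (H' * shiftMat T (ℓ : ℕ)) k t)
    -- (A) for both factorizations
    (hA : SepCond G) (hA' : SepCond G')
    -- (B) for both factorizations
    (δ : ℝ) (hδ : 0 < δ) (hB : SeqUnique L H δ)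
    (hB' : ∃ δ' : ℝ, 0 < δ' ∧ SeqUnique L H' δ')
    -- (C) for both factorizations
    (hC : V.rank = K * L) (hC' : V'.rank = K * L) :
    ∃ (Λ : Fin L × Fin K → ℝ) (σ : Equiv.Perm (Fin L × Fin K)),
      (∀ i, 0 < Λ i) ∧ V = V' * Matrix.diagonal Λ * σ.permMatrix ℝ :=
  cnmf_unique_solution_general N K T L W W' H H' X hX hX' V V' hV hV' G G' hG hG' hA hA' hC'

end
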